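/- arXiv:cs/0402060 — 2 statements merged into one kernel-verified Lean document; each statement's English description precedes it below -/
import Mathlib

section
/- A compatible measure-preserving mapping T : Z_2 → Z_2 is ergodic (induces a single-cycle permutation modulo 2^n for all n) if and only if in the representation δ_i(T(x)) = χ_i + φ_i(χ_0,...,χ_{i-1}) (mod 2), each Boolean function φ_i has odd weight, i.e., takes the value 1 at an odd number of points of {0,1}^i. -/
/-!
Compatibility makes `T` act on residues modulo every `2 ^ n`, and measure preservation makes these
actions bijective; together they force `δ_n(T x) - δ_n(x)` to depend only on the lower digits of
`x`, which is what defines `φ_n`. If `T` is a single cycle modulo `2 ^ n`, then `T ^ (2 ^ n)` fixes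
every residue modulo `2 ^ n`, and along one period the orbit runs through every pattern of lower
digits exactly once, so `T ^ (2 ^ n)` changes digit `n` by `∑ v, φ_n v`, the weight of `φ_n`
modulo 2. Hence `T` is a single cycle modulo `2 ^ (n + 1)` exactly when that weight is odd, and
induction on `n` finishes the proof.
-/

open scoped BigOperators

/-- The `j`-th binary digit of a 2-adic integer, as an element of `ZMod 2`. -/
noncomputable def bit2 (j : ℕ) (x : ℤ_[2]) : ZMod 2 := ((x.appr (j+1) / 2^j : ℕ) : ZMod 2)

/-- Compatibility = 1-Lipschitz w.r.t. the 2-adic metric. -/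
def Compatible (f : ℤ_[2] → ℤ_[2]) : Prop := ∀ x y : ℤ_[2], ‖f x - f y‖ ≤ ‖x - y‖

/-- Reduction of a 2-adic integer modulo `2^n`. -/
noncomputable def padMod (n : ℕ) (x : ℤ_[2]) : ZMod (2^n) := (x.appr n : ZMod (2^n))

/-- The map induced by `f : ℤ₂ → ℤ₂` on `ZMod (2^n)` (via canonical lifts). -/
noncomputable def inducedMap (n : ℕ) (f : ℤ_[2] → ℤ_[2]) : ZMod (2^n) → ZMod (2^n) :=
  fun a => padMod n (f ((a.val : ℕ) : ℤ_[2]))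

/-- A self-map of a set is a single cycle (transitive on points). -/
def IsSingleCycle {α : Type*} (g : α → α) : Prop := ∀ a b : α, ∃ k : ℕ, g^[k] a = b

/-- Measure preservation: `f` induces a bijection modulo `2^n` for every `n`. -/
def MeasurePreservingZ (f : ℤ_[2] → ℤ_[2]) : Prop := ∀ n : ℕ, Function.Bijective (inducedMap n f)

/-- Ergodicity: `f` induces a single-cycle permutation modulo `2^n` for every `n`. -/
def ErgodicZ (f : ℤ_[2] → ℤ_[2]) : Prop := ∀ n : ℕ, IsSingleCycle (inducedMap n f)

/-- Induced map modulo `2^n` of an `m`-variate map on `(ℤ₂)^m`. -/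
noncomputable def inducedMapM (m n : ℕ) (G : (Fin m → ℤ_[2]) → Fin m → ℤ_[2]) :
    (Fin m → ZMod (2^n)) → Fin m → ZMod (2^n) :=
  fun a j => padMod n (G (fun i => (((a i).val : ℕ) : ℤ_[2])) j)

/-- Coordinatewise compatibility of an `m`-variate map. -/
def CompatibleM (m : ℕ) (G : (Fin m → ℤ_[2]) → Fin m → ℤ_[2]) : Prop :=
  ∀ (n : ℕ) (x y : Fin m → ℤ_[2]), (∀ i, padMod n (x i) = padMod n (y i)) →
    ∀ j, padMod n (G x j) = padMod n (G y j)

/-- Ergodicity of an `m`-variate map: single cycle modulo `2^n` for all `n`. -/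
def ErgodicM (m : ℕ) (G : (Fin m → ℤ_[2]) → Fin m → ℤ_[2]) : Prop :=
  ∀ n : ℕ, IsSingleCycle (inducedMapM m n G)

/-- The 2-adic integer with prescribed binary digits. -/
noncomputable def ofBits (b : ℕ → ZMod 2) : ℤ_[2] := ∑' i : ℕ, ((b i).val : ℤ_[2]) * 2^i

/-- Bitwise XOR of 2-adic integers. -/
noncomputable def xor2 (x y : ℤ_[2]) : ℤ_[2] := ofBits (fun i => bit2 i x + bit2 i y)

/-- Bitwise AND of 2-adic integers. -/
noncomputable def and2 (x y : ℤ_[2]) : ℤ_[2] := ofBits (fun i => bit2 i x * bit2 i y)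

/-- Bitwise AND of a list, the empty AND being `-1` (the all-ones string). -/
noncomputable def andL (l : List ℤ_[2]) : ℤ_[2] := l.foldr and2 (-1)


open Function Finset

namespace PadicInt

variable {p : ℕ} [Fact p.Prime]

theorem appr_succ_mod (x : ℤ_[p]) (n : ℕ) : x.appr (n + 1) % p ^ n = x.appr n := by
  obtain ⟨c, hc⟩ := x.dvd_appr_sub_appr n (n + 1) (n.le_add_right 1)
  have hle := x.appr_mono (n.le_add_right 1)
  rw [show x.appr (n + 1) = x.appr n + p ^ n * c by omega, Nat.add_mul_mod_self_left,
    Nat.mod_eq_of_lt (x.appr_lt n)]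

theorem appr_succ_div_lt (x : ℤ_[p]) (n : ℕ) : x.appr (n + 1) / p ^ n < p :=
  Nat.div_lt_of_lt_mul (by rw [← pow_succ]; exact x.appr_lt (n + 1))

end PadicInt

section Dynamics

variable {α : Type*} {g : α → α}

theorem IsSingleCycle.mem_periodicPts (h : IsSingleCycle g) (a : α) : a ∈ periodicPts g := by
  obtain ⟨k, hk⟩ := h (g a) a
  exact ⟨k + 1, k.succ_pos, by rwa [IsPeriodicPt, IsFixedPt, iterate_succ_apply]⟩

theorem IsSingleCycle.bijOn_iterate (h : IsSingleCycle g) (a : α) :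
    Set.BijOn (g^[·] a) (Set.Iio (minimalPeriod g a)) Set.univ := by
  refine ⟨Set.mapsTo_univ _ _, iterate_injOn_Iio_minimalPeriod, fun b _ => ?_⟩
  obtain ⟨k, rfl⟩ := h a b
  exact ⟨k % minimalPeriod g a,
    Nat.mod_lt _ (minimalPeriod_pos_of_mem_periodicPts (h.mem_periodicPts a)),
    iterate_mod_minimalPeriod_eq⟩

variable [Fintype α]

theorem IsSingleCycle.minimalPeriod_eq_card (h : IsSingleCycle g) (a : α) :
    minimalPeriod g a = Fintype.card α := by
  have hbij := h.bijOn_iterate a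
  simpa using card_nbij (s := range (minimalPeriod g a)) (t := univ) (g^[·] a)
    (fun _ _ => mem_univ _) (by simpa using hbij.injOn) (by simpa using hbij.surjOn)

theorem IsSingleCycle.iterate_card (h : IsSingleCycle g) (a : α) :
    g^[Fintype.card α] a = a := by
  rw [← h.minimalPeriod_eq_card a]
  exact iterate_minimalPeriod

theorem IsSingleCycle.iterate_ne (h : IsSingleCycle g) (a : α) {k : ℕ} (hk : k ≠ 0)
    (hlt : k < Fintype.card α) : g^[k] a ≠ a :=
  not_isPeriodicPt_of_pos_of_lt_minimalPeriod hk (h.minimalPeriod_eq_card a ▸ hlt)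

theorem IsSingleCycle.sum_range_iterate {M : Type*} [AddCommMonoid M] (h : IsSingleCycle g)
    (a : α) (f : α → M) : ∑ k ∈ range (Fintype.card α), f (g^[k] a) = ∑ b, f b := by
  have hbij := h.bijOn_iterate a
  rw [← h.minimalPeriod_eq_card a]
  exact sum_nbij (g^[·] a) (fun _ _ => mem_univ _) (by simpa using hbij.injOn)
    (by simpa using hbij.surjOn) fun _ _ => rfl

end Dynamics

theorem ZMod.eq_one_of_ne_zero {a : ZMod 2} (h : a ≠ 0) : a = 1 := by
  revert a
  decide

theorem ZMod.sub_eq_sub_of_eq_iff_eq {a b c d : ZMod 2} (h : a = b ↔ c = d) :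
    a - c = b - d := by
  revert a b c d
  decide

theorem sum_eq_one_iff_odd_card {ι : Type*} [Fintype ι] (φ : ι → ZMod 2) :
    ∑ v, φ v = 1 ↔ Odd (univ.filter fun v => φ v = 1).card := by
  have hboole : ∀ a : ZMod 2, a = if a = 1 then 1 else 0 := by decide
  rw [← ZMod.natCast_eq_one_iff_odd, ← sum_boole]
  exact Eq.congr_left (sum_congr rfl fun v _ => hboole (φ v))

section Digits

variable {n : ℕ} {x y : ℤ_[2]}

theorem padMod_eq_iff_appr_eq : padMod n x = padMod n y ↔ x.appr n = y.appr n := by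
  rw [padMod, padMod, ZMod.natCast_eq_natCast_iff', Nat.mod_eq_of_lt (x.appr_lt n),
    Nat.mod_eq_of_lt (y.appr_lt n)]

theorem padMod_succ_eq_iff :
    padMod (n + 1) x = padMod (n + 1) y ↔ padMod n x = padMod n y ∧ bit2 n x = bit2 n y := by
  rw [padMod_eq_iff_appr_eq, padMod_eq_iff_appr_eq, bit2, bit2, ZMod.natCast_eq_natCast_iff',
    Nat.mod_eq_of_lt (x.appr_succ_div_lt n), Nat.mod_eq_of_lt (y.appr_succ_div_lt n),
    ← x.appr_succ_mod n, ← y.appr_succ_mod n]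
  refine ⟨fun h => by rw [h]; exact ⟨rfl, rfl⟩, fun ⟨hmod, hdiv⟩ => ?_⟩
  rw [← Nat.div_add_mod (x.appr (n + 1)) (2 ^ n), hmod, hdiv, Nat.div_add_mod]

theorem padMod_eq_iff_bit2_eq : padMod n x = padMod n y ↔ ∀ j < n, bit2 j x = bit2 j y := by
  induction n with
  | zero => simpa using Subsingleton.elim (α := ZMod 1) _ _
  | succ n ih => rw [padMod_succ_eq_iff, ih, Nat.forall_lt_succ_right]

theorem padMod_eq_toZModPow (n : ℕ) (x : ℤ_[2]) : padMod n x = PadicInt.toZModPow n x := rfl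

theorem padMod_natCast (n m : ℕ) : padMod n (m : ℤ_[2]) = m := by
  rw [padMod_eq_toZModPow, map_natCast]

theorem padMod_val_cast (a : ZMod (2 ^ n)) : padMod n (a.val : ℤ_[2]) = a := by
  rw [padMod_natCast, ZMod.natCast_val, ZMod.cast_id]

theorem padMod_eq_iff_norm_sub_le :
    padMod n x = padMod n y ↔ ‖x - y‖ ≤ (2 : ℝ) ^ (-n : ℤ) := by
  rw [show (2 : ℝ) = (2 : ℕ) by norm_num, PadicInt.norm_le_pow_iff_mem_span_pow,
    ← PadicInt.ker_toZModPow, RingHom.mem_ker, map_sub, sub_eq_zero, padMod_eq_toZModPow,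
    padMod_eq_toZModPow]

noncomputable def zmodBits (n : ℕ) (a : ZMod (2 ^ n)) : Fin n → ZMod 2 :=
  fun s => bit2 s (a.val : ℤ_[2])

theorem zmodBits_padMod (n : ℕ) (x : ℤ_[2]) :
    zmodBits n (padMod n x) = fun s : Fin n => bit2 s x :=
  funext fun s => padMod_eq_iff_bit2_eq.1 (padMod_val_cast (padMod n x)) s s.2

theorem zmodBits_bijective (n : ℕ) : Bijective (zmodBits n) := by
  refine (Fintype.bijective_iff_injective_and_card _).2 ⟨fun a b hab => ?_, by simp [ZMod.card]⟩
  rw [← padMod_val_cast a, ← padMod_val_cast b]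
  exact padMod_eq_iff_bit2_eq.2 fun j hj => congrFun hab ⟨j, hj⟩

end Digits

section Compatible

variable {T : ℤ_[2] → ℤ_[2]} {n : ℕ}

theorem Compatible.padMod_eq (hT : Compatible T) {x y : ℤ_[2]} (h : padMod n x = padMod n y) :
    padMod n (T x) = padMod n (T y) :=
  padMod_eq_iff_norm_sub_le.2 <| (hT x y).trans <| padMod_eq_iff_norm_sub_le.1 h

theorem Compatible.semiconj_inducedMap (hT : Compatible T) (n : ℕ) :
    Semiconj (padMod n) T (inducedMap n T) :=
  fun x => hT.padMod_eq (padMod_val_cast (padMod n x)).symm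

theorem Compatible.isSingleCycle_inducedMap_iff (hT : Compatible T) :
    IsSingleCycle (inducedMap n T) ↔
      ∀ x y : ℤ_[2], ∃ k, padMod n (T^[k] x) = padMod n y := by
  have hsc := fun k x => (hT.semiconj_inducedMap n).iterate_right k x
  refine ⟨fun h x y => ?_, fun h a b => ?_⟩
  · simpa only [hsc] using h (padMod n x) (padMod n y)
  · simpa only [hsc, padMod_val_cast] using h (a.val : ℤ_[2]) (b.val : ℤ_[2])

theorem bit2_iterate {φ : (Fin n → ZMod 2) → ZMod 2}
    (hφ : ∀ x, bit2 n (T x) = bit2 n x + φ (fun s : Fin n => bit2 s x))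
    (k : ℕ) (x : ℤ_[2]) :
    bit2 n (T^[k] x) = bit2 n x + ∑ j ∈ range k, φ (fun s : Fin n => bit2 s (T^[j] x)) := by
  induction k with
  | zero => simp
  | succ k ih => rw [iterate_succ_apply', hφ, ih, sum_range_succ, add_assoc]

theorem padMod_iterate_two_pow (hT : Compatible T) (hE : IsSingleCycle (inducedMap n T))
    (x : ℤ_[2]) : padMod n (T^[2 ^ n] x) = padMod n x := by
  rw [(hT.semiconj_inducedMap n).iterate_right _ x]
  simpa only [ZMod.card] using hE.iterate_card (padMod n x)

theorem sum_range_two_pow_iterate {M : Type*} [AddCommMonoid M] (hT : Compatible T)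
    (hE : IsSingleCycle (inducedMap n T)) (φ : (Fin n → ZMod 2) → M) (x : ℤ_[2]) :
    ∑ k ∈ range (2 ^ n), φ (fun s : Fin n => bit2 s (T^[k] x)) = ∑ v, φ v := by
  calc ∑ k ∈ range (2 ^ n), φ (fun s : Fin n => bit2 s (T^[k] x))
      = ∑ k ∈ range (Fintype.card (ZMod (2 ^ n))),
          φ (zmodBits n ((inducedMap n T)^[k] (padMod n x))) := by
        rw [ZMod.card]
        refine sum_congr rfl fun k _ => ?_
        rw [← (hT.semiconj_inducedMap n).iterate_right k x, zmodBits_padMod]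
    _ = ∑ a, φ (zmodBits n a) := hE.sum_range_iterate _ fun a => φ (zmodBits n a)
    _ = ∑ v, φ v := (zmodBits_bijective n).sum_comp φ

theorem bit2_iterate_two_pow (hT : Compatible T) (hE : IsSingleCycle (inducedMap n T))
    {φ : (Fin n → ZMod 2) → ZMod 2}
    (hφ : ∀ x, bit2 n (T x) = bit2 n x + φ (fun s : Fin n => bit2 s x)) (x : ℤ_[2]) :
    bit2 n (T^[2 ^ n] x) = bit2 n x + ∑ v, φ v := by
  rw [bit2_iterate hφ, sum_range_two_pow_iterate hT hE]

/-- Modulo `2 ^ (n + 1)` the cycle of `T` modulo `2 ^ n` either doubles or splits in two,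
according as `T ^ (2 ^ n)` flips digit `n` or fixes it. -/
theorem isSingleCycle_inducedMap_succ_iff (hT : Compatible T)
    (hE : IsSingleCycle (inducedMap n T))
    {φ : (Fin n → ZMod 2) → ZMod 2}
    (hφ : ∀ x, bit2 n (T x) = bit2 n x + φ (fun s : Fin n => bit2 s x)) :
    IsSingleCycle (inducedMap (n + 1) T) ↔ ∑ v, φ v = 1 := by
  have hper := padMod_iterate_two_pow hT hE
  have hbit := bit2_iterate_two_pow hT hE hφ
  constructor
  · intro hE'
    have hne : padMod (n + 1) (T^[2 ^ n] 0) ≠ padMod (n + 1) 0 := by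
      rw [(hT.semiconj_inducedMap (n + 1)).iterate_right _ 0]
      exact hE'.iterate_ne _ (pow_ne_zero n two_ne_zero)
        (by rw [ZMod.card]; exact Nat.pow_lt_pow_right one_lt_two n.lt_succ_self)
    rw [ne_eq, padMod_succ_eq_iff, hbit, and_iff_right (hper 0)] at hne
    exact ZMod.eq_one_of_ne_zero fun h0 => hne (by rw [h0, add_zero])
  · intro hsum
    rw [hT.isSingleCycle_inducedMap_iff] at hE ⊢
    intro x y
    obtain ⟨r, hr⟩ := hE x y
    by_cases hb : bit2 n (T^[r] x) = bit2 n y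
    · exact ⟨r, padMod_succ_eq_iff.2 ⟨hr, hb⟩⟩
    · refine ⟨2 ^ n + r, padMod_succ_eq_iff.2 ⟨?_, ?_⟩⟩
      · rw [iterate_add_apply, hper, hr]
      · rw [iterate_add_apply, hbit, hsum]
        exact (eq_add_of_sub_eq' (ZMod.eq_one_of_ne_zero (sub_ne_zero.2 (Ne.symm hb)))).symm

theorem Compatible.bit2_apply_eq_iff (hT : Compatible T)
    (hinj : Injective (inducedMap (n + 1) T)) {x y : ℤ_[2]} (h : padMod n x = padMod n y) :
    bit2 n (T x) = bit2 n (T y) ↔ bit2 n x = bit2 n y := by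
  have hsc := hT.semiconj_inducedMap (n + 1)
  calc bit2 n (T x) = bit2 n (T y) ↔ padMod (n + 1) (T x) = padMod (n + 1) (T y) := by
        rw [padMod_succ_eq_iff, and_iff_right (hT.padMod_eq h)]
    _ ↔ padMod (n + 1) x = padMod (n + 1) y := by rw [hsc.eq, hsc.eq, hinj.eq_iff]
    _ ↔ bit2 n x = bit2 n y := by rw [padMod_succ_eq_iff, and_iff_right h]

theorem exists_bit2_apply_eq_add (hT : Compatible T) (hinj : Injective (inducedMap (n + 1) T)) :
    ∃ φ : (Fin n → ZMod 2) → ZMod 2,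
      ∀ x, bit2 n (T x) = bit2 n x + φ (fun s : Fin n => bit2 s x) := by
  have hfac : FactorsThrough (fun x => bit2 n (T x) - bit2 n x)
      (fun x (s : Fin n) => bit2 s x) := by
    intro x y hxy
    exact ZMod.sub_eq_sub_of_eq_iff_eq <| hT.bit2_apply_eq_iff hinj <|
      padMod_eq_iff_bit2_eq.2 fun j hj => congrFun hxy ⟨j, hj⟩
  exact ⟨extend _ _ 0, fun x => by rw [hfac.extend_apply]; ring⟩

end Compatible

/-- a compatible measure-preserving `T : ℤ₂ → ℤ₂` is ergodic iff in
the representation `δ_i(T x) = χ_i + φ_i(χ_0,…,χ_{i-1})` each `φ_i` has odd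
weight (takes value 1 at an odd number of points of `{0,1}^i`). -/
theorem ergodic_iff_odd_weight (T : ℤ_[2] → ℤ_[2])
    (hTc : Compatible T) (hTm : MeasurePreservingZ T) :
    ErgodicZ T ↔
      ∀ (i : ℕ) (φ : (Fin i → ZMod 2) → ZMod 2),
        (∀ x : ℤ_[2], bit2 i (T x) = bit2 i x + φ (fun s => bit2 (s : ℕ) x)) →
        Odd (Finset.univ.filter (fun v : Fin i → ZMod 2 => φ v = 1)).card := by
  refine ⟨fun hE i φ hφ => ?_, fun hodd n => ?_⟩
  · exact (sum_eq_one_iff_odd_card φ).1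
      ((isSingleCycle_inducedMap_succ_iff hTc (hE i) hφ).1 (hE (i + 1)))
  · induction n with
    | zero => exact fun a b => ⟨0, Subsingleton.elim (α := ZMod 1) a b⟩
    | succ n ih =>
      obtain ⟨φ, hφ⟩ := exists_bit2_apply_eq_add hTc (hTm (n + 1)).1
      exact (isSingleCycle_inducedMap_succ_iff hTc ih hφ).2
        ((sum_eq_one_iff_odd_card φ).2 (hodd n φ hφ))
end

section
/- A compatible function g : Z_2 → Z_2 preserves measure if and only if it can be represented as g(x) = d + x + 2·v(x) for some d ∈ Z_2 and some compatible v : Z_2 → Z_2. -/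
/-!
For compatible `g`, bijectivity modulo every `2^n` says exactly that `g` never brings two points
closer, so `g` is an isometry of `ℤ₂`. Two `2`-adic integers of the same norm `2^-k` are `2^k`
times units, and all units of `ℤ₂` are `≡ 1 mod 2`, so they agree modulo `2^(k+1)`. Hence `g` is an
isometry iff `x ↦ g x - x` is `1/2`-Lipschitz, i.e. iff `g x - x - g 0 = 2 v x` with `v`
`1`-Lipschitz.
-/

open scoped BigOperators

namespace PadicInt

lemma norm_le_of_forall_norm_le_zpow {p : ℕ} [Fact p.Prime] {x y : ℤ_[p]}
    (h : ∀ n : ℕ, ‖y‖ ≤ (p : ℝ) ^ (-n : ℤ) → ‖x‖ ≤ (p : ℝ) ^ (-n : ℤ)) : ‖x‖ ≤ ‖y‖ := by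
  rcases eq_or_ne y 0 with rfl | hy
  · rw [norm_zero, norm_le_zero_iff]
    by_contra hx
    have := (norm_le_pow_iff_le_valuation x hx _).mp (h (x.valuation + 1) (by rw [norm_zero]; positivity))
    omega
  · rw [norm_eq_zpow_neg_valuation hy] at h ⊢
    exact h _ le_rfl

lemma norm_two : ‖(2 : ℤ_[2])‖ = 2⁻¹ := by
  simpa using norm_p (p := 2)

lemma norm_le_half_iff_lt_one (z : ℤ_[2]) : ‖z‖ ≤ 2⁻¹ ↔ ‖z‖ < 1 := by
  simpa using (norm_lt_pow_iff_norm_le_pow_sub_one z 0).symm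

lemma sub_one_mem_maximalIdeal_of_isUnit {u : ℤ_[2]} (hu : IsUnit u) :
    u - 1 ∈ IsLocalRing.maximalIdeal ℤ_[2] := by
  obtain ⟨n, hn, hmem⟩ := exists_mem_range u
  interval_cases n
  · simp_all
  · simpa using hmem

lemma norm_sub_le_half_of_isUnit {u w : ℤ_[2]} (hu : IsUnit u) (hw : IsUnit w) :
    ‖u - w‖ ≤ 2⁻¹ := by
  have h := sub_mem (sub_one_mem_maximalIdeal_of_isUnit hu) (sub_one_mem_maximalIdeal_of_isUnit hw)
  rw [sub_sub_sub_cancel_right] at h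
  rwa [norm_le_half_iff_lt_one, ← mem_nonunits]

lemma norm_sub_le_half_of_norm_eq {a b : ℤ_[2]} (h : ‖a‖ = ‖b‖) : ‖a - b‖ ≤ ‖a‖ / 2 := by
  rcases eq_or_ne a 0 with rfl | ha
  · obtain rfl : b = 0 := norm_eq_zero.mp (by simpa using h.symm)
    simp
  have hb : b ≠ 0 := by rintro rfl; simp_all
  have hval : a.valuation = b.valuation := by
    rw [norm_eq_zpow_neg_valuation ha, norm_eq_zpow_neg_valuation hb] at h
    exact_mod_cast neg_injective (zpow_right_injective₀ (by norm_num) (by norm_num) h)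
  rw [unitCoeff_spec ha, unitCoeff_spec hb, hval, ← sub_mul, norm_mul, norm_mul, norm_units,
    one_mul, mul_comm, div_eq_mul_inv]
  exact mul_le_mul_of_nonneg_left
    (norm_sub_le_half_of_isUnit (Units.isUnit _) (Units.isUnit _)) (norm_nonneg _)

end PadicInt

lemma padMod_eq_iff (n : ℕ) (x y : ℤ_[2]) :
    padMod n x = padMod n y ↔ ‖x - y‖ ≤ (2 : ℝ) ^ (-n : ℤ) := by
  change PadicInt.toZModPow n x = PadicInt.toZModPow n y ↔ _
  rw [← sub_eq_zero, ← map_sub, ← RingHom.mem_ker, PadicInt.ker_toZModPow,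
    ← PadicInt.norm_le_pow_iff_mem_span_pow]
  norm_num

lemma padMod_natCast_val (n : ℕ) (a : ZMod (2 ^ n)) : padMod n ((a.val : ℕ) : ℤ_[2]) = a := by
  have : NeZero (2 ^ n) := ⟨by positivity⟩
  change PadicInt.toZModPow n _ = a
  rw [map_natCast, ZMod.natCast_val, ZMod.cast_id]

lemma norm_sub_le_of_forall_padMod_eq {x y x' y' : ℤ_[2]}
    (h : ∀ n, padMod n x' = padMod n y' → padMod n x = padMod n y) : ‖x - y‖ ≤ ‖x' - y'‖ :=
  PadicInt.norm_le_of_forall_norm_le_zpow fun n => by simpa [padMod_eq_iff] using h n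

lemma Compatible.inducedMap_padMod {g : ℤ_[2] → ℤ_[2]} (hg : Compatible g) (n : ℕ) (x : ℤ_[2]) :
    inducedMap n g (padMod n x) = padMod n (g x) := by
  rw [inducedMap, padMod_eq_iff]
  exact (hg _ _).trans ((padMod_eq_iff n _ _).mp (padMod_natCast_val n _))

lemma measurePreservingZ_iff_isometry {g : ℤ_[2] → ℤ_[2]} (hg : Compatible g) :
    MeasurePreservingZ g ↔ Isometry g := by
  simp only [isometry_iff_dist_eq, dist_eq_norm]
  constructor
  · refine fun hm x y => le_antisymm (hg x y) (norm_sub_le_of_forall_padMod_eq fun n h => ?_)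
    apply (hm n).1
    rwa [hg.inducedMap_padMod, hg.inducedMap_padMod]
  · intro hiso n
    have : NeZero (2 ^ n) := ⟨by positivity⟩
    refine Finite.injective_iff_bijective.mp fun a b hab => ?_
    rw [inducedMap, inducedMap, padMod_eq_iff, hiso] at hab
    rwa [← padMod_natCast_val n a, ← padMod_natCast_val n b, padMod_eq_iff]

lemma isometry_iff_lipschitzWith_sub_id {g : ℤ_[2] → ℤ_[2]} :
    Isometry g ↔ LipschitzWith 2⁻¹ (fun x => g x - x) := by
  have hcomm (x y : ℤ_[2]) : g x - x - (g y - y) = g x - g y - (x - y) := sub_sub_sub_comm ..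
  simp only [isometry_iff_dist_eq, lipschitzWith_iff_dist_le_mul, dist_eq_norm, NNReal.coe_inv,
    NNReal.coe_ofNat, hcomm]
  constructor
  · intro hiso x y
    rw [inv_mul_eq_div, ← hiso x y]
    exact PadicInt.norm_sub_le_half_of_norm_eq (hiso x y)
  · intro hlip x y
    rcases eq_or_ne x y with rfl | hxy
    · simp
    have hlt : ‖g x - g y - (x - y)‖ < ‖x - y‖ := by
      have := norm_pos_iff.mpr (sub_ne_zero.mpr hxy)
      linarith [hlip x y]
    rw [← sub_add_cancel (g x - g y) (x - y), PadicInt.norm_add_eq_max_of_ne hlt.ne,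
      max_eq_right hlt.le]

lemma lipschitzWith_two_inv_iff_exists_compatible {h : ℤ_[2] → ℤ_[2]} :
    LipschitzWith 2⁻¹ h ↔ ∃ (d : ℤ_[2]) (v : ℤ_[2] → ℤ_[2]), Compatible v ∧
      ∀ x, h x = d + 2 * v x := by
  simp only [lipschitzWith_iff_dist_le_mul, dist_eq_norm, NNReal.coe_inv, NNReal.coe_ofNat]
  constructor
  · intro hlip
    have hdvd : ∀ x, (2 : ℤ_[2]) ∣ h x - h 0 := fun x => by
      have := (hlip x 0).trans (mul_le_of_le_one_right (by norm_num) (by simpa using x.norm_le_one))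
      simpa using (PadicInt.norm_lt_one_iff_dvd _).mp (this.trans_lt (by norm_num))
    choose v hv using hdvd
    refine ⟨h 0, v, fun x y => ?_, fun x => by rw [← hv, add_sub_cancel]⟩
    have := hlip x y
    rw [← sub_sub_sub_cancel_right (h x) (h y) (h 0), hv, hv, ← mul_sub, norm_mul,
      PadicInt.norm_two] at this
    exact le_of_mul_le_mul_left this (by norm_num)
  · rintro ⟨d, v, hv, hrep⟩ x y
    rw [hrep, hrep, add_sub_add_left_eq_sub, ← mul_sub, norm_mul, PadicInt.norm_two]
    exact mul_le_mul_of_nonneg_left (hv x y) (by norm_num)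

/-- a compatible `g : ℤ₂ → ℤ₂` preserves measure iff
`g(x) = d + x + 2·v(x)` for some `d ∈ ℤ₂` and compatible `v`. -/
theorem measurePreserving_iff_repr (g : ℤ_[2] → ℤ_[2]) (hg : Compatible g) :
    MeasurePreservingZ g ↔
      ∃ (d : ℤ_[2]) (v : ℤ_[2] → ℤ_[2]), Compatible v ∧
        ∀ x : ℤ_[2], g x = d + x + 2 * v x := by
  rw [measurePreservingZ_iff_isometry hg, isometry_iff_lipschitzWith_sub_id,
    lipschitzWith_two_inv_iff_exists_compatible]
  simp only [sub_eq_iff_eq_add, add_right_comm]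
end
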